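/- arXiv:2109.10171 — 3 statements merged into one kernel-verified Lean document; each statement's English description precedes it below -/
import Mathlib

section
/- Theorem (iterated eigenvalues for generalized ladder operators): Assume H₀ is self-adjoint, [H₀,Z] = λ·Z[Z†,Z] with λ real, [H₀, Z†Z] = 0, all eigenvalues of H₀ have one-dimensional eigenspaces, and H₀Φ = EΦ with Φ ≠ 0. Define Φₙ := ZⁿΦ. Then for every n with Φₙ ≠ 0: Φₙ is an eigenvector of the commutator [Z†,Z] with some real eigenvalue μₙ, and H₀Φₙ = (E + λ·(μ₀ + μ₁ + ... + μ_{n-1}))·Φₙ. -/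
/-!
Since `H₀` is self-adjoint and `λ` is real, taking adjoints in `[H₀, Z] = λ Z C` with
`C = [Z†, Z]` gives `[H₀, Z†] = -λ C Z†`, and the two relations cancel in
`[H₀, Z Z†] = [H₀, Z] Z† + Z [H₀, Z†]`. Hence `H₀` commutes with `C`, so `C` preserves the
(one-dimensional) eigenspaces of `H₀`: every eigenvector of `H₀` is an eigenvector of the
self-adjoint `C`, with the real eigenvalue given by its Rayleigh quotient. Finally, if
`H₀ v = e v` and `C v = μ v` then `H₀ (Z v) = (e + λ μ) Z v`, and induction on `n` gives the
eigenvalue of `Zⁿ Φ`.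
-/

open ContinuousLinearMap

section StarAlgebra

variable {R A : Type*} [CommSemiring R] [StarRing R] [Ring A] [StarRing A] [Algebra R A]
  [StarModule R A]

theorem commute_mul_star_of_commutator_eq_smul {H Z C : A} {r : R} (hH : IsSelfAdjoint H)
    (hC : IsSelfAdjoint C) (hr : IsSelfAdjoint r) (hcomm : H * Z - Z * H = r • (Z * C)) :
    Commute H (Z * star Z) := by
  have hstar : star Z * H - H * star Z = r • (C * star Z) := by
    simpa only [star_sub, star_mul, star_smul, hH.star_eq, hC.star_eq, hr.star_eq]
      using congrArg star hcomm
  have hsplit : H * (Z * star Z) - Z * star Z * H =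
      (H * Z - Z * H) * star Z - Z * (star Z * H - H * star Z) := by
    noncomm_ring
  rw [hcomm, hstar, smul_mul_assoc, mul_assoc Z C, mul_smul_comm, sub_self] at hsplit
  exact sub_eq_zero.mp hsplit

end StarAlgebra

section SimpleEigenvalues

variable {R M : Type*} [Semiring R] [AddCommMonoid M] [Module R M] [TopologicalSpace M]

theorem exists_apply_eq_smul_of_commute {H C : M →L[R] M}
    (hsimple : ∀ (c : R) (v w : M), H v = c • v → H w = c • w → v ≠ 0 → ∃ t : R, w = t • v)
    (hHC : Commute H C) {c : R} {v : M} (hv : v ≠ 0) (hev : H v = c • v) :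
    ∃ t : R, C v = t • v :=
  hsimple c v (C v) hev
    (by rw [← mul_apply_eq_comp, hHC.eq, mul_apply_eq_comp, hev, map_smul]) hv

end SimpleEigenvalues

section Ladder

variable {R M : Type*} [CommRing R] [AddCommGroup M] [Module R M] [TopologicalSpace M]
  [IsTopologicalAddGroup M] [ContinuousConstSMul R M]

theorem apply_apply_eq_smul_of_commutator_eq {H Z C : M →L[R] M} {a e μ : R} {v : M}
    (hcomm : H ∘L Z - Z ∘L H = a • (Z ∘L C)) (hH : H v = e • v) (hC : C v = μ • v) :
    H (Z v) = (e + a * μ) • Z v := by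
  have h := congrArg (· v) hcomm
  simp only [sub_apply, comp_apply, smul_apply, hH, hC, map_smul] at h
  linear_combination (norm := module) h

theorem pow_apply_eq_smul_of_commutator_eq {H Z C : M →L[R] M} {a e : R} {q : M → R} {Φ : M}
    (hcomm : H ∘L Z - Z ∘L H = a • (Z ∘L C))
    (hq : ∀ (v : M) (c : R), v ≠ 0 → H v = c • v → C v = q v • v) (hΦ : H Φ = e • Φ) :
    ∀ n : ℕ, (Z ^ n) Φ ≠ 0 →
      H ((Z ^ n) Φ) = (e + a * ∑ k ∈ Finset.range n, q ((Z ^ k) Φ)) • (Z ^ n) Φ := by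
  intro n
  induction n with
  | zero => simpa using fun _ => hΦ
  | succ n ih =>
    intro hn
    rw [pow_succ', mul_apply_eq_comp] at hn ⊢
    have hn' : (Z ^ n) Φ ≠ 0 := fun h => hn (by rw [h, map_zero])
    have hH := ih hn'
    rw [apply_apply_eq_smul_of_commutator_eq hcomm hH (hq _ _ hn' hH), Finset.sum_range_succ]
    congr 1
    ring

end Ladder

section InnerProduct

variable {𝕜 E : Type*} [RCLike 𝕜] [NormedAddCommGroup E] [InnerProductSpace 𝕜 E]

theorem inner_apply_div_norm_sq_eq {T : E →L[𝕜] E} {v : E} {t : 𝕜} (hv : v ≠ 0)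
    (hT : T v = t • v) : inner 𝕜 v (T v) / (‖v‖ ^ 2 : 𝕜) = t := by
  have hnorm : (‖v‖ ^ 2 : 𝕜) ≠ 0 := by simpa using hv
  rw [hT, inner_smul_right, inner_self_eq_norm_sq_to_K, mul_div_assoc, div_self hnorm, mul_one]

variable [CompleteSpace E]

theorem IsSelfAdjoint.im_inner_apply_div_norm_sq {T : E →L[𝕜] E} (hT : IsSelfAdjoint T)
    (v : E) : RCLike.im (inner 𝕜 v (T v) / (‖v‖ ^ 2 : 𝕜)) = 0 := by
  rw [← RCLike.conj_eq_iff_im, map_div₀, map_pow, RCLike.conj_ofReal, inner_conj_symm]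
  congr 1
  exact hT.isSymmetric v v

end InnerProduct

theorem stmt_13_general {E : Type*} [NormedAddCommGroup E] [InnerProductSpace ℂ E] [CompleteSpace E]
    (H₀ Z : E →L[ℂ] E) (l : ℝ) (En : ℂ) (Φ : E)
    (hsa : IsSelfAdjoint H₀)
    (hcomm : H₀ ∘L Z - Z ∘L H₀ =
      (l : ℂ) • (Z ∘L (adjoint Z ∘L Z - Z ∘L adjoint Z)))
    (hcomm2 : H₀ ∘L (adjoint Z ∘L Z) = (adjoint Z ∘L Z) ∘L H₀)
    (hsimple : ∀ (c : ℂ) (v w : E), H₀ v = c • v → H₀ w = c • w → v ≠ 0 →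
      ∃ t : ℂ, w = t • v)
    (heig : H₀ Φ = En • Φ) :
    ∀ n : ℕ, (Z ^ n) Φ ≠ 0 →
      ((adjoint Z ∘L Z - Z ∘L adjoint Z) ((Z ^ n) Φ) =
        ((inner ℂ ((Z ^ n) Φ) ((adjoint Z ∘L Z - Z ∘L adjoint Z) ((Z ^ n) Φ)) : ℂ) /
          (‖(Z ^ n) Φ‖ ^ 2 : ℂ)) • (Z ^ n) Φ) ∧
      ((inner ℂ ((Z ^ n) Φ) ((adjoint Z ∘L Z - Z ∘L adjoint Z) ((Z ^ n) Φ)) : ℂ) /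
          (‖(Z ^ n) Φ‖ ^ 2 : ℂ)).im = 0 ∧
      H₀ ((Z ^ n) Φ) =
        (En + (l : ℂ) * ∑ k ∈ Finset.range n,
          ((inner ℂ ((Z ^ k) Φ) ((adjoint Z ∘L Z - Z ∘L adjoint Z) ((Z ^ k) Φ)) : ℂ) /
            (‖(Z ^ k) Φ‖ ^ 2 : ℂ))) • (Z ^ n) Φ := by
  set C := adjoint Z ∘L Z - Z ∘L adjoint Z
  have hC : IsSelfAdjoint C := (IsSelfAdjoint.star_mul_self Z).sub (IsSelfAdjoint.mul_star_self Z)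
  have hHC : Commute H₀ C := (show Commute H₀ (star Z * Z) from hcomm2).sub_right
    (commute_mul_star_of_commutator_eq_smul hsa hC (Complex.conj_ofReal l) hcomm)
  have hrayleigh : ∀ (v : E) (c : ℂ), v ≠ 0 → H₀ v = c • v →
      C v = (inner ℂ v (C v) / (‖v‖ ^ 2 : ℂ)) • v := by
    intro v c hv hev
    obtain ⟨t, ht⟩ := exists_apply_eq_smul_of_commute hsimple hHC hv hev
    have hquot : inner ℂ v (C v) / (‖v‖ ^ 2 : ℂ) = t := inner_apply_div_norm_sq_eq hv ht
    rwa [hquot]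
  have hladder := pow_apply_eq_smul_of_commutator_eq hcomm hrayleigh heig
  exact fun n hn =>
    ⟨hrayleigh _ _ hn (hladder n hn), hC.im_inner_apply_div_norm_sq _, hladder n hn⟩

theorem stmt_13 {E : Type*} [NormedAddCommGroup E] [InnerProductSpace ℂ E] [CompleteSpace E]
    (H₀ Z : E →L[ℂ] E) (l : ℝ) (En : ℂ) (Φ : E) (hΦ : Φ ≠ 0)
    (hsa : IsSelfAdjoint H₀)
    (hcomm : H₀ ∘L Z - Z ∘L H₀ =
      (l : ℂ) • (Z ∘L (adjoint Z ∘L Z - Z ∘L adjoint Z)))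
    (hcomm2 : H₀ ∘L (adjoint Z ∘L Z) = (adjoint Z ∘L Z) ∘L H₀)
    (hsimple : ∀ (c : ℂ) (v w : E), H₀ v = c • v → H₀ w = c • w → v ≠ 0 →
      ∃ t : ℂ, w = t • v)
    (heig : H₀ Φ = En • Φ) :
    ∀ n : ℕ, (Z ^ n) Φ ≠ 0 →
      ((adjoint Z ∘L Z - Z ∘L adjoint Z) ((Z ^ n) Φ) =
        ((inner ℂ ((Z ^ n) Φ) ((adjoint Z ∘L Z - Z ∘L adjoint Z) ((Z ^ n) Φ)) : ℂ) /
          (‖(Z ^ n) Φ‖ ^ 2 : ℂ)) • (Z ^ n) Φ) ∧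
      ((inner ℂ ((Z ^ n) Φ) ((adjoint Z ∘L Z - Z ∘L adjoint Z) ((Z ^ n) Φ)) : ℂ) /
          (‖(Z ^ n) Φ‖ ^ 2 : ℂ)).im = 0 ∧
      H₀ ((Z ^ n) Φ) =
        (En + (l : ℂ) * ∑ k ∈ Finset.range n,
          ((inner ℂ ((Z ^ k) Φ) ((adjoint Z ∘L Z - Z ∘L adjoint Z) ((Z ^ k) Φ)) : ℂ) /
            (‖(Z ^ k) Φ‖ ^ 2 : ℂ))) • (Z ^ n) Φ :=
  stmt_13_general H₀ Z l En Φ hsa hcomm hcomm2 hsimple heig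
end

section
/- Under the hypotheses of the previous theorem, each nonzero Φₙ = ZⁿΦ is also an eigenvector of ZZ† with eigenvalue αₙ = ‖Z†Φₙ‖²/‖Φₙ‖² and of Z†Z with eigenvalue βₙ = ‖ZΦₙ‖²/‖Φₙ‖², and μₙ = βₙ - αₙ. -/
/-!
Write `C = Z†Z - ZZ†`, which is self-adjoint. Taking adjoints in `[H₀, Z] = λ Z C` gives
`[H₀, Z†] = -λ C Z†`, so the two contributions to `[H₀, Z Z†]` cancel: `H₀` commutes with `ZZ†`
as well as with `Z†Z`, hence with `C`. Since the eigenvalues of `H₀` are simple, an operator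
commuting with `H₀` acts on each eigenvector of `H₀` as a scalar. Inductively, `Φₙ` is then an
eigenvector of `C`, and the commutation relation makes `Φₙ₊₁ = Z Φₙ` an eigenvector of `H₀` again.
The scalars by which `Z†Z` and `ZZ†` act on `Φₙ` are Rayleigh quotients, because
`⟪Φₙ, Z†Z Φₙ⟫ = ‖Z Φₙ‖²` and `⟪Φₙ, ZZ† Φₙ⟫ = ‖Z† Φₙ‖²`.
-/

open ContinuousLinearMap

theorem commute_mul_star_of_sub_eq_smul {R : Type*} [Ring R] [StarRing R] [Algebra ℂ R]
    [StarModule ℂ R] {H Z : R} (l : ℝ) (hH : IsSelfAdjoint H)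
    (h : H * Z - Z * H = (l : ℂ) • (Z * (star Z * Z - Z * star Z))) :
    Commute H (Z * star Z) := by
  set C := star Z * Z - Z * star Z
  have hC : star C = C := by simp [C]
  have h' : star Z * H - H * star Z = (l : ℂ) • (C * star Z) := by
    simpa [hH.star_eq, hC] using congrArg star h
  calc H * (Z * star Z) = (H * Z - Z * H) * star Z - Z * (star Z * H - H * star Z)
        + Z * star Z * H := by noncomm_ring
    _ = Z * star Z * H := by rw [h, h', smul_mul_assoc, mul_smul_comm, mul_assoc]; abel

theorem apply_apply_eq_smul_of_commute {R M : Type*} [Semiring R] [TopologicalSpace M]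
    [AddCommMonoid M] [Module R M] {T S : M →L[R] M} (hTS : Commute T S) {c : R} {ψ : M}
    (h : T ψ = c • ψ) : T (S ψ) = c • S ψ := by
  rw [← mul_apply_eq_comp, hTS.eq, mul_apply_eq_comp, h, map_smul]

section Ladder

variable {R M : Type*} [CommRing R] [TopologicalSpace M] [AddCommGroup M] [Module R M]

def HasSimpleEigenvalues (T : M →L[R] M) : Prop :=
  ∀ (c : R) (v w : M), T v = c • v → T w = c • w → v ≠ 0 → ∃ t : R, w = t • v

theorem HasSimpleEigenvalues.exists_apply_eq_smul {T S : M →L[R] M}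
    (hT : HasSimpleEigenvalues T) (hTS : Commute T S) {c : R} {ψ : M} (hψ : ψ ≠ 0)
    (h : T ψ = c • ψ) : ∃ s : R, S ψ = s • ψ :=
  hT c ψ (S ψ) h (apply_apply_eq_smul_of_commute hTS h) hψ

theorem apply_apply_eq_smul_of_sub_eq_smul_mul [IsTopologicalAddGroup M]
    [ContinuousConstSMul R M] {H Z C : M →L[R] M} {a c μ : R} {ψ : M}
    (hcomm : H * Z - Z * H = a • (Z * C)) (hH : H ψ = c • ψ) (hC : C ψ = μ • ψ) :
    H (Z ψ) = (c + a * μ) • Z ψ := by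
  have := congrArg (· ψ) hcomm
  simp only [sub_apply, smul_apply, mul_apply_eq_comp, hH, hC, map_smul] at this
  rw [add_smul, mul_smul, ← this]
  abel

theorem HasSimpleEigenvalues.exists_apply_pow_apply_eq_smul [IsTopologicalAddGroup M]
    [ContinuousConstSMul R M] {H Z C : M →L[R] M} {a : R} (hsimple : HasSimpleEigenvalues H)
    (hcomm : H * Z - Z * H = a • (Z * C)) (hHC : Commute H C) {c : R} {Φ : M}
    (hΦ : H Φ = c • Φ) (n : ℕ) : ∃ c' : R, H ((Z ^ n) Φ) = c' • (Z ^ n) Φ := by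
  induction n with
  | zero => exact ⟨c, hΦ⟩
  | succ n ih =>
    obtain ⟨c', hc'⟩ := ih
    rw [pow_succ', mul_apply_eq_comp]
    by_cases hψ : (Z ^ n) Φ = 0
    · exact ⟨0, by simp [hψ]⟩
    obtain ⟨μ, hμ⟩ := hsimple.exists_apply_eq_smul hHC hψ hc'
    exact ⟨_, apply_apply_eq_smul_of_sub_eq_smul_mul hcomm hc' hμ⟩

end Ladder

theorem eq_norm_sq_div_of_adjoint_comp_self_apply_eq_smul {𝕜 E F : Type*} [RCLike 𝕜]
    [NormedAddCommGroup E] [InnerProductSpace 𝕜 E] [CompleteSpace E] [NormedAddCommGroup F]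
    [InnerProductSpace 𝕜 F] [CompleteSpace F] (A : E →L[𝕜] F) {ψ : E} {s : 𝕜}
    (hψ : ψ ≠ 0) (h : (adjoint A ∘L A) ψ = s • ψ) :
    s = ((‖A ψ‖ ^ 2 / ‖ψ‖ ^ 2 : ℝ) : 𝕜) := by
  have hinner : (‖A ψ‖ ^ 2 : 𝕜) = s * ‖ψ‖ ^ 2 := by
    rw [← inner_self_eq_norm_sq_to_K, ← adjoint_inner_right, ← comp_apply, h,
      inner_smul_right, inner_self_eq_norm_sq_to_K]
  have hψ' : (‖ψ‖ : 𝕜) ≠ 0 := by simpa using hψ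
  push_cast
  field_simp
  exact hinner.symm

theorem stmt_14_general {E : Type*} [NormedAddCommGroup E] [InnerProductSpace ℂ E] [CompleteSpace E]
    (H₀ Z : E →L[ℂ] E) (l : ℝ) (En : ℂ) (Φ : E)
    (hsa : IsSelfAdjoint H₀)
    (hcomm : H₀ ∘L Z - Z ∘L H₀ =
      (l : ℂ) • (Z ∘L (adjoint Z ∘L Z - Z ∘L adjoint Z)))
    (hcomm2 : H₀ ∘L (adjoint Z ∘L Z) = (adjoint Z ∘L Z) ∘L H₀)
    (hsimple : ∀ (c : ℂ) (v w : E), H₀ v = c • v → H₀ w = c • w → v ≠ 0 →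
      ∃ t : ℂ, w = t • v)
    (heig : H₀ Φ = En • Φ) :
    ∀ n : ℕ, (Z ^ n) Φ ≠ 0 →
      ((Z ∘L adjoint Z) ((Z ^ n) Φ) =
        ((‖(adjoint Z) ((Z ^ n) Φ)‖ ^ 2 / ‖(Z ^ n) Φ‖ ^ 2 : ℝ) : ℂ) • (Z ^ n) Φ) ∧
      ((adjoint Z ∘L Z) ((Z ^ n) Φ) =
        ((‖Z ((Z ^ n) Φ)‖ ^ 2 / ‖(Z ^ n) Φ‖ ^ 2 : ℝ) : ℂ) • (Z ^ n) Φ) ∧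
      ((adjoint Z ∘L Z - Z ∘L adjoint Z) ((Z ^ n) Φ) =
        (((‖Z ((Z ^ n) Φ)‖ ^ 2 / ‖(Z ^ n) Φ‖ ^ 2
          - ‖(adjoint Z) ((Z ^ n) Φ)‖ ^ 2 / ‖(Z ^ n) Φ‖ ^ 2 : ℝ)) : ℂ) • (Z ^ n) Φ) := by
  intro n hn
  replace hsimple : HasSimpleEigenvalues H₀ := hsimple
  have hZstarZ : Commute H₀ (adjoint Z ∘L Z) := hcomm2
  have hZZstar : Commute H₀ (Z ∘L adjoint Z) := commute_mul_star_of_sub_eq_smul l hsa hcomm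
  obtain ⟨c, hc⟩ :=
    hsimple.exists_apply_pow_apply_eq_smul hcomm (hZstarZ.sub_right hZZstar) heig n
  obtain ⟨β, hβ⟩ := hsimple.exists_apply_eq_smul hZstarZ hn hc
  obtain ⟨α, hα⟩ := hsimple.exists_apply_eq_smul hZZstar hn hc
  obtain rfl := eq_norm_sq_div_of_adjoint_comp_self_apply_eq_smul Z hn hβ
  obtain rfl := eq_norm_sq_div_of_adjoint_comp_self_apply_eq_smul (adjoint Z) hn
    (by rwa [adjoint_adjoint])
  refine ⟨hα, hβ, ?_⟩
  rw [sub_apply, hβ, hα, ← sub_smul]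
  norm_cast

theorem stmt_14 {E : Type*} [NormedAddCommGroup E] [InnerProductSpace ℂ E] [CompleteSpace E]
    (H₀ Z : E →L[ℂ] E) (l : ℝ) (En : ℂ) (Φ : E) (hΦ : Φ ≠ 0)
    (hsa : IsSelfAdjoint H₀)
    (hcomm : H₀ ∘L Z - Z ∘L H₀ =
      (l : ℂ) • (Z ∘L (adjoint Z ∘L Z - Z ∘L adjoint Z)))
    (hcomm2 : H₀ ∘L (adjoint Z ∘L Z) = (adjoint Z ∘L Z) ∘L H₀)
    (hsimple : ∀ (c : ℂ) (v w : E), H₀ v = c • v → H₀ w = c • w → v ≠ 0 →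
      ∃ t : ℂ, w = t • v)
    (heig : H₀ Φ = En • Φ) :
    ∀ n : ℕ, (Z ^ n) Φ ≠ 0 →
      ((Z ∘L adjoint Z) ((Z ^ n) Φ) =
        ((‖(adjoint Z) ((Z ^ n) Φ)‖ ^ 2 / ‖(Z ^ n) Φ‖ ^ 2 : ℝ) : ℂ) • (Z ^ n) Φ) ∧
      ((adjoint Z ∘L Z) ((Z ^ n) Φ) =
        ((‖Z ((Z ^ n) Φ)‖ ^ 2 / ‖(Z ^ n) Φ‖ ^ 2 : ℝ) : ℂ) • (Z ^ n) Φ) ∧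
      ((adjoint Z ∘L Z - Z ∘L adjoint Z) ((Z ^ n) Φ) =
        (((‖Z ((Z ^ n) Φ)‖ ^ 2 / ‖(Z ^ n) Φ‖ ^ 2
          - ‖(adjoint Z) ((Z ^ n) Φ)‖ ^ 2 / ‖(Z ^ n) Φ‖ ^ 2 : ℝ)) : ℂ) • (Z ^ n) Φ) :=
  stmt_14_general H₀ Z l En Φ hsa hcomm hcomm2 hsimple heig
end

section
/- Biorthogonality: Let H be a continuous linear operator on a complex Hilbert space with [H, Z_j] = λ_j Z_j, Hφ = Eφ, H†ψ = conj(E)ψ, and set φ_{j,n} := Z_jⁿφ, ψ_{l,m} := (Z_l†)ᵐψ. If n·λ_j ≠ -m·λ_l, then ⟨ψ_{l,m}, φ_{j,n}⟩ = 0. -/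
open ContinuousLinearMap

/-!
If `[H, Z] = λ Z`, then `Z` shifts eigenvalues of `H` by `λ`, and taking adjoints `Z†` shifts
eigenvalues of `H†` by `-conj λ`. So `Z_jⁿ φ` is an eigenvector of `H` for `E + nλ_j` and
`(Z_l†)ᵐ ψ` one of `H†` for `conj (E - mλ_l)`; an eigenvector of `H†` for `conj a` is orthogonal
to every eigenvector of `H` for an eigenvalue `b ≠ a`.
-/

theorem apply_pow_apply_eq_smul_of_comp_sub_comp_eq_smul {R M : Type*} [CommRing R]
    [TopologicalSpace M] [AddCommGroup M] [Module R M] [IsTopologicalAddGroup M]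
    [ContinuousConstSMul R M] {H Z : M →L[R] M} {lam : R} (h : H ∘L Z - Z ∘L H = lam • Z)
    {a : R} {φ : M} (hφ : H φ = a • φ) (n : ℕ) :
    H ((Z ^ n) φ) = (a + n * lam) • (Z ^ n) φ := by
  have hcomm (x : M) : H (Z x) = Z (H x) + lam • Z x := by
    rw [← sub_eq_iff_eq_add', ← comp_apply, ← comp_apply, ← sub_apply, h, smul_apply]
  induction n with
  | zero => simpa using hφ
  | succ n ih =>
    rw [pow_succ', mul_apply_eq_comp, hcomm, ih, map_smul, ← add_smul]
    push_cast
    ring_nf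

theorem adjoint_comp_sub_comp_adjoint_eq_smul {𝕜 E : Type*} [RCLike 𝕜] [NormedAddCommGroup E]
    [InnerProductSpace 𝕜 E] [CompleteSpace E] {H Z : E →L[𝕜] E} {lam : 𝕜}
    (h : H ∘L Z - Z ∘L H = lam • Z) :
    adjoint H ∘L adjoint Z - adjoint Z ∘L adjoint H = -(starRingEnd 𝕜 lam) • adjoint Z := by
  have h' := congrArg adjoint h
  rw [map_sub, adjoint_comp, adjoint_comp, ← star_eq_adjoint (lam • Z), star_smul,
    star_eq_adjoint, ← starRingEnd_apply] at h'
  linear_combination (norm := module) -h'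

theorem inner_eq_zero_of_adjoint_apply_eq_smul_of_apply_eq_smul {𝕜 E : Type*} [RCLike 𝕜]
    [NormedAddCommGroup E] [InnerProductSpace 𝕜 E] [CompleteSpace E] {T : E →L[𝕜] E}
    {a b : 𝕜} {x y : E} (hx : adjoint T x = starRingEnd 𝕜 a • x) (hy : T y = b • y)
    (hab : a ≠ b) : inner 𝕜 x y = 0 := by
  have key : inner 𝕜 (adjoint T x) y = inner 𝕜 x (T y) := adjoint_inner_left T y x
  rw [hx, hy, inner_smul_left, inner_smul_right, RCLike.conj_conj] at key
  exact (mul_eq_zero.mp (by linear_combination key : (a - b) * inner 𝕜 x y = 0)).resolve_left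
    (sub_ne_zero.mpr hab)

theorem stmt_18_general {E : Type*} [NormedAddCommGroup E] [InnerProductSpace ℂ E] [CompleteSpace E]
    {ι : Type*} (H : E →L[ℂ] E) (Z : ι → (E →L[ℂ] E)) (lam : ι → ℂ)
    (h : ∀ j, H ∘L Z j - Z j ∘L H = lam j • Z j)
    (En : ℂ) (φ ψ : E)
    (heig : H φ = En • φ)
    (heig' : (adjoint H) ψ = (starRingEnd ℂ) En • ψ)
    (j l : ι) (n m : ℕ)
    (hne : (n : ℂ) * lam j ≠ -((m : ℂ) * lam l)) :
    inner ℂ (((adjoint (Z l)) ^ m) ψ) ((Z j ^ n) φ) = (0 : ℂ) := by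
  have hφn := apply_pow_apply_eq_smul_of_comp_sub_comp_eq_smul (h j) heig n
  have hψm := apply_pow_apply_eq_smul_of_comp_sub_comp_eq_smul
    (adjoint_comp_sub_comp_adjoint_eq_smul (h l)) heig' m
  have hconj : starRingEnd ℂ En + m * -starRingEnd ℂ (lam l) = starRingEnd ℂ (En - m * lam l) := by
    simp only [map_sub, map_mul, map_natCast]
    ring
  rw [hconj] at hψm
  refine inner_eq_zero_of_adjoint_apply_eq_smul_of_apply_eq_smul hψm hφn fun heq => hne ?_
  linear_combination -heq

theorem stmt_18 {E : Type*} [NormedAddCommGroup E] [InnerProductSpace ℂ E] [CompleteSpace E]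
    {ι : Type*} (H : E →L[ℂ] E) (Z : ι → (E →L[ℂ] E)) (lam : ι → ℂ)
    (h : ∀ j, H ∘L Z j - Z j ∘L H = lam j • Z j)
    (En : ℂ) (φ ψ : E) (hφ : φ ≠ 0) (hψ : ψ ≠ 0)
    (heig : H φ = En • φ)
    (heig' : (adjoint H) ψ = (starRingEnd ℂ) En • ψ)
    (j l : ι) (n m : ℕ)
    (hne : (n : ℂ) * lam j ≠ -((m : ℂ) * lam l)) :
    inner ℂ (((adjoint (Z l)) ^ m) ψ) ((Z j ^ n) φ) = (0 : ℂ) :=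
  stmt_18_general H Z lam h En φ ψ heig heig' j l n m hne
end
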